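/- Let F be a field of characteristic 0, and let f ∈ F[x][y] with deg_y f ≤ d, written f = ∑_{e=0}^{d} f_e(x) y^e. If f is a sum of s terms of the form c_i · g_i(x,y)^{e_i} (powers of polynomials), then each coefficient f_e is an F-linear combination of at most s·(d+1) terms of the form c · g_i(x,β)^{e_i} with β ∈ F; that is, coefficient extraction from a sum of powers yields a sum of at most s(d+1) powers. -/
import Mathlib

open Polynomial

lemma alpha_exists (F : Type) [Field F] [CharZero F] (d e : ℕ) (he : e ≤ d) :
    ∃ α : Fin (d+1) → F, ∀ t ≤ d,
      (∑ k, α k * ((k : ℕ) : F) ^ t) = if t = e then 1 else 0 := by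
  set v : Fin (d+1) → F := fun k => ((k : ℕ) : F) with hv
  have hinj : Set.InjOn v (Finset.univ : Finset (Fin (d+1))) := by
    intro a _ b _ hab
    have : (a : ℕ) = (b : ℕ) := Nat.cast_injective hab
    exact Fin.ext this
  refine ⟨fun k => (Lagrange.basis Finset.univ v k).coeff e, ?_⟩
  intro t ht
  have hdeg : (X ^ t : F[X]).degree < (Finset.univ : Finset (Fin (d+1))).card := by
    simp [Polynomial.degree_X_pow]
    exact_mod_cast Nat.lt_succ_of_le ht
  have h := Lagrange.eq_interpolate hinj hdeg
  have h2 := congrArg (fun p => Polynomial.coeff p e) h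
  simp only [Lagrange.interpolate_apply, Polynomial.finset_sum_coeff,
    Polynomial.coeff_C_mul, Polynomial.coeff_X_pow] at h2
  rw [show (if t = e then (1:F) else 0) = (if e = t then 1 else 0) by simp [eq_comm], h2]
  apply Finset.sum_congr rfl
  intro k _
  simp [v, mul_comm]

/-- Coefficient extraction from a sum of powers. If
`f = ∑_{i=1}^{s} c_i · g_i(x,y)^{e_i}` has `deg_y f ≤ d` (char 0), then each
coefficient `f_e` of `y^e` (for `e ≤ d`) is a linear combination of at most
`s·(d+1)` terms of the form `c · g_i(x,β)^{e_i}` with `β ∈ F`. -/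
theorem stmt14 (F : Type) [Field F] [CharZero F] (n s d : ℕ)
    (c : Fin s → F) (g : Fin s → Polynomial (MvPolynomial (Fin n) F))
    (ee : Fin s → ℕ)
    (f : Polynomial (MvPolynomial (Fin n) F))
    (hf : f = ∑ i, Polynomial.C (MvPolynomial.C (c i)) * (g i) ^ (ee i))
    (hdeg : f.natDegree ≤ d) :
    ∀ e ≤ d, ∃ (m : ℕ) (_ : m ≤ s * (d + 1))
      (idx : Fin m → Fin s) (γ β : Fin m → F),
      f.coeff e = ∑ j, MvPolynomial.C (γ j) *
        (Polynomial.eval (MvPolynomial.C (β j)) (g (idx j))) ^ (ee (idx j)) := by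
  intro e he
  obtain ⟨α, hα⟩ := alpha_exists F d e he
  set v : Fin (d+1) → F := fun k => ((k : ℕ) : F) with hv
  -- key: f.coeff e = ∑ k, C (α k) * f.eval (C (v k))
  have key : f.coeff e = ∑ k, MvPolynomial.C (α k) * f.eval (MvPolynomial.C (v k)) := by
    have heval : ∀ k : Fin (d+1), f.eval (MvPolynomial.C (v k)) =
        ∑ t ∈ Finset.range (d+1), f.coeff t * (MvPolynomial.C (v k)) ^ t := by
      intro k
      rw [Polynomial.eval_eq_sum_range' (Nat.lt_succ_of_le hdeg)]
    calc f.coeff e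
        = ∑ t ∈ Finset.range (d+1), f.coeff t *
            MvPolynomial.C (if t = e then 1 else 0) := by
          rw [Finset.sum_eq_single e]
          · simp
          · intro t _ hte; simp [hte]
          · intro h; exact absurd (Finset.mem_range.mpr (Nat.lt_succ_of_le he)) h
      _ = ∑ t ∈ Finset.range (d+1), f.coeff t *
            MvPolynomial.C (∑ k, α k * (v k) ^ t) := by
          apply Finset.sum_congr rfl
          intro t ht
          rw [hα t (Nat.lt_succ_iff.mp (Finset.mem_range.mp ht))]
      _ = ∑ t ∈ Finset.range (d+1), ∑ k, MvPolynomial.C (α k) *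
            (f.coeff t * (MvPolynomial.C (v k)) ^ t) := by
          apply Finset.sum_congr rfl
          intro t _
          rw [map_sum, Finset.mul_sum]
          apply Finset.sum_congr rfl
          intro k _
          simp [map_mul, map_pow]
          ring
      _ = ∑ k, MvPolynomial.C (α k) * f.eval (MvPolynomial.C (v k)) := by
          rw [Finset.sum_comm]
          apply Finset.sum_congr rfl
          intro k _
          rw [heval, Finset.mul_sum]
  -- expand f via hf
  have key2 : f.coeff e = ∑ k : Fin (d+1), ∑ i : Fin s,
      MvPolynomial.C (α k * c i) *
        (Polynomial.eval (MvPolynomial.C (v k)) (g i)) ^ (ee i) := by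
    rw [key]
    apply Finset.sum_congr rfl
    intro k _
    rw [hf, Polynomial.eval_finset_sum, Finset.mul_sum]
    apply Finset.sum_congr rfl
    intro i _
    simp [map_mul, mul_assoc]
  refine ⟨s * (d+1), le_refl _,
    fun j => (finProdFinEquiv.symm j).1,
    fun j => α (finProdFinEquiv.symm j).2 * c (finProdFinEquiv.symm j).1,
    fun j => v (finProdFinEquiv.symm j).2, ?_⟩
  rw [key2, Finset.sum_comm]
  calc ∑ i : Fin s, ∑ k : Fin (d+1), MvPolynomial.C (α k * c i) *
          (Polynomial.eval (MvPolynomial.C (v k)) (g i)) ^ (ee i)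
      = ∑ p : Fin s × Fin (d+1), MvPolynomial.C (α p.2 * c p.1) *
          (Polynomial.eval (MvPolynomial.C (v p.2)) (g p.1)) ^ (ee p.1) :=
        (Fintype.sum_prod_type (fun p : Fin s × Fin (d+1) => MvPolynomial.C (α p.2 * c p.1) *
          (Polynomial.eval (MvPolynomial.C (v p.2)) (g p.1)) ^ (ee p.1))).symm
    _ = _ := (Fintype.sum_equiv finProdFinEquiv.symm _ _ (fun j => rfl)).symm
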